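/- An si-logic L has degree of fmp equal to 1 if and only if L has the finite model property and is axiomatizable by Jankov formulas. -/

import Mathlib

/-- Intuitionistic propositional formulas over variables `p₀, p₁, …`. -/
inductive IForm : Type
  | var : ℕ → IForm
  | bot : IForm
  | and : IForm → IForm → IForm
  | or : IForm → IForm → IForm
  | imp : IForm → IForm → IForm

namespace IForm

/-- Uniform substitution. -/
def subst (σ : ℕ → IForm) : IForm → IForm
  | var n => σ n
  | bot => bot
  | and φ ψ => and (subst σ φ) (subst σ ψ)
  | or φ ψ => or (subst σ φ) (subst σ ψ)
  | imp φ ψ => imp (subst σ φ) (subst σ ψ)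

/-- Biconditional `φ ↔ ψ`. -/
def biimp (φ ψ : IForm) : IForm := and (imp φ ψ) (imp ψ φ)

end IForm

/-- The theorems of the intuitionistic propositional calculus `IPC`, given by a
standard Hilbert-style axiomatization (all axioms are schemes, so `IPC` is
closed under uniform substitution) together with modus ponens. -/
inductive IPC : IForm → Prop
  | ax1 (φ ψ : IForm) : IPC (φ.imp (ψ.imp φ))
  | ax2 (φ ψ χ : IForm) : IPC ((φ.imp (ψ.imp χ)).imp ((φ.imp ψ).imp (φ.imp χ)))
  | andE1 (φ ψ : IForm) : IPC ((φ.and ψ).imp φ)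
  | andE2 (φ ψ : IForm) : IPC ((φ.and ψ).imp ψ)
  | andI (φ ψ : IForm) : IPC (φ.imp (ψ.imp (φ.and ψ)))
  | orI1 (φ ψ : IForm) : IPC (φ.imp (φ.or ψ))
  | orI2 (φ ψ : IForm) : IPC (ψ.imp (φ.or ψ))
  | orE (φ ψ χ : IForm) : IPC ((φ.imp χ).imp ((ψ.imp χ).imp ((φ.or ψ).imp χ)))
  | exfalso (φ : IForm) : IPC (IForm.bot.imp φ)
  | mp (φ ψ : IForm) : IPC (φ.imp ψ) → IPC φ → IPC ψ

/-- A superintuitionistic logic: a set of formulas containing `IPC` and closed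
under modus ponens and uniform substitution. -/
def SuperIntuitionistic (L : Set IForm) : Prop :=
  (∀ φ, IPC φ → φ ∈ L) ∧
  (∀ φ ψ, φ.imp ψ ∈ L → φ ∈ L → ψ ∈ L) ∧
  (∀ φ (σ : ℕ → IForm), φ ∈ L → φ.subst σ ∈ L)
/-- Kripke forcing on a poset, relative to a valuation by upsets. -/
def Forces {X : Type} [Preorder X] (v : ℕ → Set X) : X → IForm → Prop
  | x, .var n => x ∈ v n
  | _, .bot => False
  | x, .and φ ψ => Forces v x φ ∧ Forces v x ψ
  | x, .or φ ψ => Forces v x φ ∨ Forces v x ψ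
  | x, .imp φ ψ => ∀ y, x ≤ y → Forces v y φ → Forces v y ψ

/-- A formula is valid in a poset if it is forced at every point under every
valuation by upsets. -/
def ValidIn (X : Type) [Preorder X] (φ : IForm) : Prop :=
  ∀ v : ℕ → Set X, (∀ n, IsUpperSet (v n)) → ∀ x : X, Forces v x φ

/-- A poset validates a logic if every formula of the logic is valid in it. -/
def ValidLogic (X : Type) [Preorder X] (L : Set IForm) : Prop :=
  ∀ φ ∈ L, ValidIn X φ

/-- `Fin(L) = Fin(L')`: the two logics are validated by the same finite posets. -/
def SameFinPosets (L L' : Set IForm) : Prop :=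
  ∀ (X : Type) [Fintype X] [PartialOrder X], ValidLogic X L ↔ ValidLogic X L'

/-- The fmp span of a logic: the si-logics validated by the same finite posets. -/
def fmpSpan (L : Set IForm) : Set (Set IForm) :=
  {L' | SuperIntuitionistic L' ∧ SameFinPosets L L'}

/-- The degree of the finite model property of a logic. -/
def degFmp (L : Set IForm) : Cardinal :=
  Cardinal.mk (fmpSpan L)
/-- `IPC + Ax`: the least si-logic containing `Ax`. -/
def IPCPlus (Ax : Set IForm) : Set IForm :=
  {φ | ∀ L : Set IForm, SuperIntuitionistic L → Ax ⊆ L → φ ∈ L}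
/-- The upsets of a preorder. -/
abbrev Ups (X : Type) [Preorder X] : Type := {U : Set X // IsUpperSet U}

/-- Intersection of upsets. -/
def upsInter {X : Type} [Preorder X] (U V : Ups X) : Ups X := ⟨U.1 ∩ V.1, U.2.inter V.2⟩

/-- Union of upsets. -/
def upsUnion {X : Type} [Preorder X] (U V : Ups X) : Ups X := ⟨U.1 ∪ V.1, U.2.union V.2⟩

/-- Heyting implication of upsets: `U → V = {x : ↑x ∩ U ⊆ V}`. -/
def upsHimp {X : Type} [Preorder X] (U V : Ups X) : Ups X :=
  ⟨{x | ∀ y, x ≤ y → y ∈ U.1 → y ∈ V.1}, by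
    intro a b hab ha y hby hyU
    exact ha y (le_trans hab hby) hyU⟩

/-- The empty upset. -/
def upsEmpty {X : Type} [Preorder X] : Ups X := ⟨∅, isUpperSet_empty⟩

/-- Finite conjunction. -/
def bigConj : List IForm → IForm
  | [] => IForm.bot.imp IForm.bot
  | φ :: l => φ.and (bigConj l)

/-- The Jankov formula of a finite rooted poset `X` with root `r`: choosing a
distinct variable `p_U` for each upset `U` of `X`, it is `δ → p_s`, where `δ`
is the conjunction of `p_{U∩V} ↔ p_U ∧ p_V`, `p_{U∪V} ↔ p_U ∨ p_V`,
`p_{U→V} ↔ (p_U → p_V)` over all upsets `U, V`, together with `p_∅ ↔ ⊥`, and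
`s = X ∖ {r}` is the second largest element of `Up(X)`. -/
noncomputable def jankov (X : Type) [Fintype X] [PartialOrder X] (r : X)
    (hr : ∀ x, r ≤ x) : IForm :=
  letI : Fintype (Ups X) := Fintype.ofFinite _
  let e : Ups X ≃ Fin (Fintype.card (Ups X)) := Fintype.equivFin (Ups X)
  let p : Ups X → IForm := fun U => IForm.var (e U).val
  let all : List (Ups X) := (List.finRange (Fintype.card (Ups X))).map e.symm
  let triple : Ups X → Ups X → IForm := fun U V =>
    ((p (upsInter U V)).biimp ((p U).and (p V))).and
      (((p (upsUnion U V)).biimp ((p U).or (p V))).and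
        ((p (upsHimp U V)).biimp ((p U).imp (p V))))
  let δ : IForm :=
    (bigConj (all.map fun U => bigConj (all.map fun V => triple U V))).and
      ((p upsEmpty).biimp IForm.bot)
  let s : Ups X := ⟨Set.univ \ {r}, by
    intro a b hab ha
    simp only [Set.mem_diff, Set.mem_univ, Set.mem_singleton_iff, true_and] at ha ⊢
    intro hb
    exact ha (le_antisymm (hb ▸ hab) (hr a))⟩
  δ.imp (p s)

/-- A formula is a Jankov formula if it is the Jankov formula of some finite
rooted poset. -/
def IsJankovFormula (φ : IForm) : Prop :=
  ∃ (X : Type) (i1 : Fintype X) (i2 : PartialOrder X) (r : X)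
    (hr : ∀ x : X, i2.le r x), φ = @jankov X i1 i2 r hr
/-- An si-logic is axiomatizable by Jankov formulas if it is the least si-logic
containing some set of Jankov formulas of finite rooted posets. -/
def JankovAxiomatizable (L : Set IForm) : Prop :=
  ∃ Ax : Set IForm, (∀ φ ∈ Ax, IsJankovFormula φ) ∧ L = IPCPlus Ax
/-- `L⁺ = Log(Fin(L))`: the logic of the finite posets validating `L`. -/
def LPlus (L : Set IForm) : Set IForm :=
  {φ | ∀ (X : Type) [Fintype X] [PartialOrder X], ValidLogic X L → ValidIn X φ}

/-- A logic has the finite model property if it is the logic of its finite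
posets. -/
def HasFMP (L : Set IForm) : Prop := L = LPlus L

/-!
If `deg(L) = 1`, then `L` equals the members `Log(Fin(L))` and
`IPC + {𝒥(X) : X finite rooted, X ⊭ L}` of its fmp span. The latter has the same finite posets
as `L`: a finite poset refuting `L` refutes it in a rooted upset `X`, and then refutes `𝒥(X)`.

Conversely, let `L` have the fmp and be axiomatized by Jankov formulas, and `Fin(L') = Fin(L)`.
Then `L' ⊆ Log(Fin(L')) = Log(Fin(L)) = L`, and every axiom `𝒥(X)` of `L` lies in `L'`:
otherwise Jankov's lemma gives `X ⊨ L'`, hence `X ⊨ L ∋ 𝒥(X)`, while `X ⊭ 𝒥(X)`.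

Jankov's lemma (`X ⊭ M` implies `𝒥(X) ∈ M`) is proved syntactically: under `δ`, the
substitution `σ` sending `p` to `p_{ν(p)}` turns each formula `φ` into one equivalent to `p_U`,
`U` the upset where `φ` is forced. If the root does not force `φ`, then `U ⊆ s`, so
`σφ → 𝒥(X)` is in `IPC`. Applied to the logic of a poset `Y`, the lemma also gives
`Y ⊨ 𝒥(X)` whenever `Y` validates a formula refuted in `X`.
-/

section Semantics

variable {X : Type} [Preorder X]

theorem forces_mono {v : ℕ → Set X} (hv : ∀ n, IsUpperSet (v n)) :
    ∀ (φ : IForm) {x y : X}, x ≤ y → Forces v x φ → Forces v y φ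
  | .var n, _, _, hxy, h => hv n hxy h
  | .bot, _, _, _, h => h.elim
  | .and φ ψ, _, _, hxy, h => ⟨forces_mono hv φ hxy h.1, forces_mono hv ψ hxy h.2⟩
  | .or φ ψ, _, _, hxy, h => h.imp (forces_mono hv φ hxy) (forces_mono hv ψ hxy)
  | .imp _ _, _, _, hxy, h => fun z hz => h z (hxy.trans hz)

theorem isUpperSet_forces {v : ℕ → Set X} (hv : ∀ n, IsUpperSet (v n)) (φ : IForm) :
    IsUpperSet {x : X | Forces v x φ} :=
  fun _ _ hxy h => forces_mono hv φ hxy h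

theorem forces_biimp {v : ℕ → Set X} {x : X} {φ ψ : IForm} :
    Forces v x (φ.biimp ψ) ↔ ∀ y, x ≤ y → (Forces v y φ ↔ Forces v y ψ) :=
  ⟨fun h y hy => ⟨h.1 y hy, h.2 y hy⟩,
    fun h => ⟨fun y hy => (h y hy).1, fun y hy => (h y hy).2⟩⟩

theorem forces_bigConj {v : ℕ → Set X} {x : X} :
    ∀ {l : List IForm}, Forces v x (bigConj l) ↔ ∀ φ ∈ l, Forces v x φ
  | [] => by simp [bigConj, Forces]
  | φ :: l => by simp [bigConj, Forces, forces_bigConj]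

theorem forces_subst {v : ℕ → Set X} (σ : ℕ → IForm) :
    ∀ (φ : IForm) (x : X),
      Forces v x (φ.subst σ) ↔ Forces (fun n => {y | Forces v y (σ n)}) x φ
  | .var _, _ => Iff.rfl
  | .bot, _ => Iff.rfl
  | .and φ ψ, x => and_congr (forces_subst σ φ x) (forces_subst σ ψ x)
  | .or φ ψ, x => or_congr (forces_subst σ φ x) (forces_subst σ ψ x)
  | .imp φ ψ, _ =>
    forall₂_congr fun y _ => imp_congr (forces_subst σ φ y) (forces_subst σ ψ y)

theorem ValidIn.subst {φ : IForm} (h : ValidIn X φ) (σ : ℕ → IForm) :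
    ValidIn X (φ.subst σ) := fun _ hv x =>
  (forces_subst σ φ x).2 (h _ (fun n => isUpperSet_forces hv (σ n)) x)

theorem IPC.validIn {φ : IForm} (h : IPC φ) : ValidIn X φ := by
  induction h with
  | ax1 φ ψ => intro v hv x y _ h z hz _; exact forces_mono hv φ hz h
  | ax2 φ ψ χ =>
      intro v hv x y _ h1 z hz h2 w hw h3
      exact h1 w (hz.trans hw) h3 w le_rfl (h2 w hw h3)
  | andE1 φ ψ => intro v hv x y _ h; exact h.1
  | andE2 φ ψ => intro v hv x y _ h; exact h.2
  | andI φ ψ => intro v hv x y _ h z hz h2; exact ⟨forces_mono hv φ hz h, h2⟩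
  | orI1 φ ψ => intro v hv x y _ h; exact Or.inl h
  | orI2 φ ψ => intro v hv x y _ h; exact Or.inr h
  | orE φ ψ χ =>
      intro v hv x y _ h1 z hz h2 w hw h3
      exact h3.elim (h1 w (hz.trans hw)) (h2 w hw)
  | exfalso φ => intro v hv x y _ h; exact h.elim
  | mp φ ψ _ _ ih1 ih2 => intro v hv x; exact ih1 v hv x x le_rfl (ih2 v hv x)

theorem superIntuitionistic_setOf_validIn (X : Type) [Preorder X] :
    SuperIntuitionistic {φ | ValidIn X φ} :=
  ⟨fun _ h => h.validIn, fun _ _ h1 h2 v hv x => h1 v hv x x le_rfl (h2 v hv x),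
    fun _ σ h => ValidIn.subst h σ⟩

end Semantics

section UpperSet

variable {Y : Type} [Preorder Y] {U : Set Y}

theorem forces_preimage_val_iff (hU : IsUpperSet U) (v : ℕ → Set Y) :
    ∀ (φ : IForm) (x : U), Forces (fun n => Subtype.val ⁻¹' v n) x φ ↔ Forces v x.1 φ
  | .var _, _ => Iff.rfl
  | .bot, _ => Iff.rfl
  | .and φ ψ, x =>
    and_congr (forces_preimage_val_iff hU v φ x) (forces_preimage_val_iff hU v ψ x)
  | .or φ ψ, x =>
    or_congr (forces_preimage_val_iff hU v φ x) (forces_preimage_val_iff hU v ψ x)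
  | .imp φ ψ, x => by
      refine ⟨fun h y hxy hφ => ?_, fun h y hxy hφ => ?_⟩
      · have hy : y ∈ U := hU hxy x.2
        exact (forces_preimage_val_iff hU v ψ ⟨y, hy⟩).1
          (h ⟨y, hy⟩ hxy ((forces_preimage_val_iff hU v φ ⟨y, hy⟩).2 hφ))
      · exact (forces_preimage_val_iff hU v ψ y).2
          (h y.1 hxy ((forces_preimage_val_iff hU v φ y).1 hφ))

theorem ValidIn.of_isUpperSet (hU : IsUpperSet U) {φ : IForm} (h : ValidIn Y φ) :
    ValidIn U φ := by
  intro u hu x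
  let v : ℕ → Set Y := fun n => Subtype.val '' u n
  have hv : ∀ n, IsUpperSet (v n) := by
    rintro n a b hab ⟨c, hc, rfl⟩
    exact ⟨⟨b, hU hab c.2⟩, hu n (show c ≤ ⟨b, hU hab c.2⟩ from hab) hc, rfl⟩
  simpa only [v, Set.preimage_image_eq _ Subtype.val_injective] using
    (forces_preimage_val_iff hU v φ x).2 (h v hv x)

theorem validIn_iff_forall_Ici {φ : IForm} : ValidIn Y φ ↔ ∀ y : Y, ValidIn (Set.Ici y) φ :=
  ⟨fun h y => h.of_isUpperSet (isUpperSet_Ici y), fun h v hv y =>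
    (forces_preimage_val_iff (isUpperSet_Ici y) v φ ⟨y, le_rfl⟩).1
      (h y _ (fun n _ _ hab ha => hv n hab ha) _)⟩

end UpperSet

inductive Der : List IForm → IForm → Prop
  | ax {Γ φ} : IPC φ → Der Γ φ
  | hyp {Γ φ} : φ ∈ Γ → Der Γ φ
  | mp {Γ φ ψ} : Der Γ (φ.imp ψ) → Der Γ φ → Der Γ ψ

namespace Der

variable {Γ Γ' : List IForm} {φ ψ χ φ' ψ' : IForm}

theorem weaken (h : Der Γ φ) (hs : Γ ⊆ Γ') : Der Γ' φ := by
  induction h with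
  | ax h => exact ax h
  | hyp h => exact hyp (hs h)
  | mp _ _ ih1 ih2 => exact mp ih1 ih2

theorem head : Der (φ :: Γ) φ := hyp List.mem_cons_self

theorem lift (h : Der Γ φ) : Der (ψ :: Γ) φ := h.weaken (List.subset_cons_self _ _)

theorem imp_self : Der Γ (φ.imp φ) :=
  ax <| IPC.mp _ _ (IPC.mp _ _ (IPC.ax2 φ (φ.imp φ) φ) (IPC.ax1 φ (φ.imp φ))) (IPC.ax1 φ φ)

theorem imp_intro (h : Der (φ :: Γ) ψ) : Der Γ (φ.imp ψ) := by
  induction h with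
  | ax h => exact mp (ax (IPC.ax1 _ _)) (ax h)
  | hyp h =>
      rcases List.mem_cons.1 h with rfl | h
      · exact imp_self
      · exact mp (ax (IPC.ax1 _ _)) (hyp h)
  | mp _ _ ih1 ih2 => exact mp (mp (ax (IPC.ax2 _ _ _)) ih1) ih2

theorem cons_of_imp (h : Der Γ (φ.imp ψ)) : Der (φ :: Γ) ψ := mp h.lift head

theorem ipc_of_nil (h : Der [] φ) : IPC φ := by
  induction h with
  | ax h => exact h
  | hyp h => simp at h
  | mp _ _ ih1 ih2 => exact IPC.mp _ _ ih1 ih2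

theorem andI (h1 : Der Γ φ) (h2 : Der Γ ψ) : Der Γ (φ.and ψ) :=
  mp (mp (ax (IPC.andI _ _)) h1) h2

theorem andE1 (h : Der Γ (φ.and ψ)) : Der Γ φ := mp (ax (IPC.andE1 _ _)) h

theorem andE2 (h : Der Γ (φ.and ψ)) : Der Γ ψ := mp (ax (IPC.andE2 _ _)) h

theorem orI1 (h : Der Γ φ) : Der Γ (φ.or ψ) := mp (ax (IPC.orI1 _ _)) h

theorem orI2 (h : Der Γ ψ) : Der Γ (φ.or ψ) := mp (ax (IPC.orI2 _ _)) h

theorem orE (h : Der Γ (φ.or ψ)) (h1 : Der (φ :: Γ) χ) (h2 : Der (ψ :: Γ) χ) : Der Γ χ :=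
  mp (mp (mp (ax (IPC.orE _ _ _)) h1.imp_intro) h2.imp_intro) h

theorem imp_trans (h1 : Der Γ (φ.imp ψ)) (h2 : Der Γ (ψ.imp χ)) : Der Γ (φ.imp χ) :=
  imp_intro (mp h2.lift h1.cons_of_imp)

theorem and_mono (h1 : Der Γ (φ.imp φ')) (h2 : Der Γ (ψ.imp ψ')) :
    Der Γ ((φ.and ψ).imp (φ'.and ψ')) :=
  imp_intro <| andI (mp h1.lift head.andE1) (mp h2.lift head.andE2)

theorem or_mono (h1 : Der Γ (φ.imp φ')) (h2 : Der Γ (ψ.imp ψ')) :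
    Der Γ ((φ.or ψ).imp (φ'.or ψ')) :=
  imp_intro <| orE head (orI1 (mp h1.lift.lift head)) (orI2 (mp h2.lift.lift head))

theorem imp_mono (h1 : Der Γ (φ'.imp φ)) (h2 : Der Γ (ψ.imp ψ')) :
    Der Γ ((φ.imp ψ).imp (φ'.imp ψ')) :=
  imp_intro <| imp_intro <| mp h2.lift.lift (mp head.lift (mp h1.lift.lift head))

theorem biimpI (h1 : Der Γ (φ.imp ψ)) (h2 : Der Γ (ψ.imp φ)) : Der Γ (φ.biimp ψ) :=
  andI h1 h2

theorem biimp_mp (h : Der Γ (φ.biimp ψ)) : Der Γ (φ.imp ψ) := andE1 h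

theorem biimp_mpr (h : Der Γ (φ.biimp ψ)) : Der Γ (ψ.imp φ) := andE2 h

theorem biimp_refl : Der Γ (φ.biimp φ) := biimpI imp_self imp_self

theorem biimp_symm (h : Der Γ (φ.biimp ψ)) : Der Γ (ψ.biimp φ) :=
  biimpI h.biimp_mpr h.biimp_mp

theorem biimp_trans (h1 : Der Γ (φ.biimp ψ)) (h2 : Der Γ (ψ.biimp χ)) :
    Der Γ (φ.biimp χ) :=
  biimpI (h1.biimp_mp.imp_trans h2.biimp_mp) (h2.biimp_mpr.imp_trans h1.biimp_mpr)

theorem and_congr (h1 : Der Γ (φ.biimp φ')) (h2 : Der Γ (ψ.biimp ψ')) :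
    Der Γ ((φ.and ψ).biimp (φ'.and ψ')) :=
  biimpI (and_mono h1.biimp_mp h2.biimp_mp) (and_mono h1.biimp_mpr h2.biimp_mpr)

theorem or_congr (h1 : Der Γ (φ.biimp φ')) (h2 : Der Γ (ψ.biimp ψ')) :
    Der Γ ((φ.or ψ).biimp (φ'.or ψ')) :=
  biimpI (or_mono h1.biimp_mp h2.biimp_mp) (or_mono h1.biimp_mpr h2.biimp_mpr)

theorem imp_congr (h1 : Der Γ (φ.biimp φ')) (h2 : Der Γ (ψ.biimp ψ')) :
    Der Γ ((φ.imp ψ).biimp (φ'.imp ψ')) :=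
  biimpI (imp_mono h1.biimp_mpr h2.biimp_mp) (imp_mono h1.biimp_mp h2.biimp_mpr)

theorem of_bigConj {l : List IForm} (h : Der Γ (bigConj l)) (hφ : φ ∈ l) : Der Γ φ := by
  induction l with
  | nil => simp at hφ
  | cons ψ l ih =>
      rcases List.mem_cons.1 hφ with rfl | hφ
      · exact andE1 (ψ := bigConj l) h
      · exact ih (andE2 (φ := ψ) h) hφ

end Der

section JankovFormula

variable {X : Type} [PartialOrder X]

def upsNonRoot (r : X) (hr : ∀ x, r ≤ x) : Ups X :=
  ⟨Set.univ \ {r}, fun a b hab ha =>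
    ⟨trivial, fun hb : b = r => ha.2 (le_antisymm (hb ▸ hab) (hr a))⟩⟩

variable (q : Ups X → ℕ)

def jankovVar (U : Ups X) : IForm := .var (q U)

def jankovTriple (U V : Ups X) : IForm :=
  ((jankovVar q (upsInter U V)).biimp ((jankovVar q U).and (jankovVar q V))).and
    (((jankovVar q (upsUnion U V)).biimp ((jankovVar q U).or (jankovVar q V))).and
      ((jankovVar q (upsHimp U V)).biimp ((jankovVar q U).imp (jankovVar q V))))

def jankovDelta (all : List (Ups X)) : IForm :=
  (bigConj (all.map fun U => bigConj (all.map fun V => jankovTriple q U V))).and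
    ((jankovVar q upsEmpty).biimp .bot)

end JankovFormula

theorem jankov_eq_imp (X : Type) [Fintype X] [PartialOrder X] (r : X) (hr : ∀ x, r ≤ x) :
    ∃ (q : Ups X → ℕ) (all : List (Ups X)), Function.Injective q ∧ (∀ U, U ∈ all) ∧
      jankov X r hr = (jankovDelta q all).imp (jankovVar q (upsNonRoot r hr)) := by
  let : Fintype (Ups X) := Fintype.ofFinite _
  let e := Fintype.equivFin (Ups X)
  refine ⟨fun U => e U, (List.finRange _).map e.symm,
    fun U V h => e.injective (Fin.val_injective h), fun U => ?_, rfl⟩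
  exact List.mem_map.2 ⟨e U, List.mem_finRange _, e.symm_apply_apply U⟩

section JankovDerivation

variable {X : Type} [PartialOrder X] (q : Ups X → ℕ) {all : List (Ups X)}

theorem der_jankovDelta_triple (hall : ∀ U, U ∈ all) (U V : Ups X) :
    Der [jankovDelta q all] (jankovTriple q U V) :=
  (Der.head.andE1.of_bigConj (List.mem_map_of_mem (hall U))).of_bigConj
    (List.mem_map_of_mem (hall V))

theorem der_jankovDelta_inter (hall : ∀ U, U ∈ all) (U V : Ups X) :
    Der [jankovDelta q all]
      ((jankovVar q (upsInter U V)).biimp ((jankovVar q U).and (jankovVar q V))) :=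
  (der_jankovDelta_triple q hall U V).andE1

theorem der_jankovDelta_union (hall : ∀ U, U ∈ all) (U V : Ups X) :
    Der [jankovDelta q all]
      ((jankovVar q (upsUnion U V)).biimp ((jankovVar q U).or (jankovVar q V))) :=
  (der_jankovDelta_triple q hall U V).andE2.andE1

theorem der_jankovDelta_himp (hall : ∀ U, U ∈ all) (U V : Ups X) :
    Der [jankovDelta q all]
      ((jankovVar q (upsHimp U V)).biimp ((jankovVar q U).imp (jankovVar q V))) :=
  (der_jankovDelta_triple q hall U V).andE2.andE2

theorem der_jankovDelta_empty : Der [jankovDelta q all] ((jankovVar q upsEmpty).biimp .bot) :=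
  Der.head.andE2

theorem der_jankovDelta_imp_of_subset (hall : ∀ U, U ∈ all) {U V : Ups X} (h : U.1 ⊆ V.1) :
    Der [jankovDelta q all] ((jankovVar q U).imp (jankovVar q V)) := by
  have hUV : upsInter U V = U := Subtype.ext (Set.inter_eq_left.mpr h)
  have := (der_jankovDelta_inter q hall U V).biimp_mp
  rw [hUV] at this
  exact this.imp_trans (Der.ax (IPC.andE2 _ _))

variable (v : ℕ → Set X) (hv : ∀ n, IsUpperSet (v n))

def forcingUps (φ : IForm) : Ups X := ⟨{x | Forces v x φ}, isUpperSet_forces hv φ⟩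

def jankovSubst (n : ℕ) : IForm := jankovVar q ⟨v n, hv n⟩

theorem der_jankovDelta_subst_biimp (hall : ∀ U, U ∈ all) :
    ∀ φ : IForm, Der [jankovDelta q all]
      ((φ.subst (jankovSubst q v hv)).biimp (jankovVar q (forcingUps v hv φ)))
  | .var _ => Der.biimp_refl
  | .bot => (der_jankovDelta_empty q).biimp_symm
  | .and φ ψ => (Der.and_congr (der_jankovDelta_subst_biimp hall φ)
      (der_jankovDelta_subst_biimp hall ψ)).biimp_trans
        (der_jankovDelta_inter q hall _ _).biimp_symm
  | .or φ ψ => (Der.or_congr (der_jankovDelta_subst_biimp hall φ)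
      (der_jankovDelta_subst_biimp hall ψ)).biimp_trans
        (der_jankovDelta_union q hall _ _).biimp_symm
  | .imp φ ψ => (Der.imp_congr (der_jankovDelta_subst_biimp hall φ)
      (der_jankovDelta_subst_biimp hall ψ)).biimp_trans
        (der_jankovDelta_himp q hall _ _).biimp_symm

end JankovDerivation

theorem exists_ipc_subst_imp_jankov {X : Type} [Fintype X] [PartialOrder X] (r : X)
    (hr : ∀ x, r ≤ x) {φ : IForm} {v : ℕ → Set X} (hv : ∀ n, IsUpperSet (v n)) {x₀ : X}
    (hx₀ : ¬ Forces v x₀ φ) : ∃ σ, IPC ((φ.subst σ).imp (jankov X r hr)) := by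
  obtain ⟨q, all, -, hall, hJ⟩ := jankov_eq_imp X r hr
  refine ⟨jankovSubst q v hv, hJ ▸ ?_⟩
  have hφ : (forcingUps v hv φ).1 ⊆ (upsNonRoot r hr).1 := fun x hx =>
    ⟨trivial, fun hxr => hx₀ (forces_mono hv φ (hr x₀) (hxr ▸ hx))⟩
  have hδ : Der [jankovDelta q all]
      ((φ.subst (jankovSubst q v hv)).imp (jankovVar q (upsNonRoot r hr))) :=
    (der_jankovDelta_subst_biimp q v hv hall φ).biimp_mp.imp_trans
      (der_jankovDelta_imp_of_subset q hall hφ)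
  -- `δ ⊢ σφ → p_s` becomes `⊢ σφ → δ → p_s`
  exact (hδ.cons_of_imp.weaken (List.Perm.swap _ _ _).subset).imp_intro.imp_intro.ipc_of_nil

theorem jankov_mem_of_not_validLogic {X : Type} [Fintype X] [PartialOrder X] (r : X)
    (hr : ∀ x, r ≤ x) {M : Set IForm} (hM : SuperIntuitionistic M) (h : ¬ ValidLogic X M) :
    jankov X r hr ∈ M := by
  simp only [ValidLogic, ValidIn, not_forall] at h
  obtain ⟨φ, hφ, v, hv, x₀, hx₀⟩ := h
  obtain ⟨σ, hσ⟩ := exists_ipc_subst_imp_jankov r hr hv hx₀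
  exact hM.2.1 _ _ (hM.1 _ hσ) (hM.2.2 φ σ hφ)

theorem not_validIn_jankov (X : Type) [Fintype X] [PartialOrder X] (r : X) (hr : ∀ x, r ≤ x) :
    ¬ ValidIn X (jankov X r hr) := by
  obtain ⟨q, all, hq, -, hJ⟩ := jankov_eq_imp X r hr
  let u : ℕ → Set X := fun n => {x | ∃ U : Ups X, q U = n ∧ x ∈ U.1}
  have hu : ∀ n, IsUpperSet (u n) := by
    rintro n x y hxy ⟨U, rfl, hx⟩
    exact ⟨U, rfl, U.2 hxy hx⟩
  have hvar : ∀ U x, Forces u x (jankovVar q U) ↔ x ∈ U.1 := fun U x =>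
    ⟨fun ⟨V, hVU, hx⟩ => hq hVU ▸ hx, fun hx => ⟨U, rfl, hx⟩⟩
  have htriple : ∀ U V x, Forces u x (jankovTriple q U V) := by
    intro U V x
    simp only [jankovTriple, Forces, forces_biimp, hvar]
    exact ⟨fun _ _ => Iff.rfl, fun _ _ => Iff.rfl, fun _ _ => Iff.rfl⟩
  have hδ : Forces u r (jankovDelta q all) := by
    refine ⟨forces_bigConj.2 fun _ hφ => ?_,
      forces_biimp.2 fun y _ => (hvar _ y).trans Iff.rfl⟩
    obtain ⟨U, -, rfl⟩ := List.mem_map.1 hφ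
    refine forces_bigConj.2 fun _ hψ => ?_
    obtain ⟨V, -, rfl⟩ := List.mem_map.1 hψ
    exact htriple U V r
  rw [hJ]
  intro h
  exact ((hvar _ r).1 (h u hu r r le_rfl hδ)).2 rfl

section Logics

variable {Ax L L' : Set IForm}

theorem superIntuitionistic_IPCPlus (Ax : Set IForm) : SuperIntuitionistic (IPCPlus Ax) :=
  ⟨fun φ h _ hL _ => hL.1 φ h,
    fun φ ψ h1 h2 M hM hAx => hM.2.1 φ ψ (h1 M hM hAx) (h2 M hM hAx),
    fun φ σ h M hM hAx => hM.2.2 φ σ (h M hM hAx)⟩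

theorem subset_IPCPlus : Ax ⊆ IPCPlus Ax := fun _ hφ _ _ hAx => hAx hφ

theorem IPCPlus_subset (hL : SuperIntuitionistic L) (hAx : Ax ⊆ L) : IPCPlus Ax ⊆ L :=
  fun _ hφ => hφ L hL hAx

theorem validLogic_IPCPlus_iff {Y : Type} [Preorder Y] :
    ValidLogic Y (IPCPlus Ax) ↔ ValidLogic Y Ax :=
  ⟨fun h φ hφ => h φ (subset_IPCPlus hφ),
    fun h _ hφ => IPCPlus_subset (superIntuitionistic_setOf_validIn Y) h hφ⟩

theorem subset_LPlus : L ⊆ LPlus L := fun _ hφ _ _ _ h => h _ hφ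

theorem superIntuitionistic_LPlus (L : Set IForm) : SuperIntuitionistic (LPlus L) :=
  ⟨fun _ h _ _ _ _ => h.validIn,
    fun _ _ h1 h2 X _ _ hX v hv x => h1 X hX v hv x x le_rfl (h2 X hX v hv x),
    fun _ σ h X _ _ hX => (h X hX).subst σ⟩

theorem sameFinPosets_LPlus (L : Set IForm) : SameFinPosets L (LPlus L) :=
  fun _ _ _ => ⟨fun h _ hφ => hφ _ h, fun h _ hφ => h _ (subset_LPlus hφ)⟩

theorem LPlus_congr (h : SameFinPosets L L') : LPlus L = LPlus L' :=
  Set.ext fun _ =>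
    ⟨fun hφ X _ _ hX => hφ X ((h X).2 hX), fun hφ X _ _ hX => hφ X ((h X).1 hX)⟩

theorem HasFMP.subset_of_sameFinPosets (hL : HasFMP L) (h : SameFinPosets L L') : L' ⊆ L := by
  intro φ hφ
  rw [hL, LPlus_congr h]
  exact subset_LPlus hφ

theorem IsJankovFormula.mem_of_sameFinPosets {φ : IForm} (hφ : IsJankovFormula φ)
    (hφL : φ ∈ L) (hL' : SuperIntuitionistic L') (h : SameFinPosets L L') : φ ∈ L' := by
  obtain ⟨X, _, _, r, hr, rfl⟩ := hφ
  by_contra hφL'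
  have hXL' : ValidLogic X L' :=
    by_contra fun hX => hφL' (jankov_mem_of_not_validLogic r hr hL' hX)
  exact not_validIn_jankov X r hr ((h X).2 hXL' _ hφL)

def jankovAxioms (L : Set IForm) : Set IForm :=
  {φ | ∃ (X : Type) (i1 : Fintype X) (i2 : PartialOrder X) (r : X) (hr : ∀ x : X, i2.le r x),
    ¬ @ValidLogic X i2.toPreorder L ∧ φ = @jankov X i1 i2 r hr}

theorem IPCPlus_jankovAxioms_mem_fmpSpan (L : Set IForm) :
    IPCPlus (jankovAxioms L) ∈ fmpSpan L := by
  refine ⟨superIntuitionistic_IPCPlus _, fun Y _ _ => ?_⟩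
  rw [validLogic_IPCPlus_iff]
  constructor
  · rintro hYL _ ⟨X, _, _, r, hr, hXL, rfl⟩
    exact jankov_mem_of_not_validLogic r hr (superIntuitionistic_setOf_validIn Y)
      fun hX => hXL fun φ hφ => hX φ (hYL φ hφ)
  · intro hYJ φ hφ
    by_contra hYφ
    obtain ⟨y, hyφ⟩ := not_forall.1 (mt validIn_iff_forall_Ici.2 hYφ)
    let : Fintype (Set.Ici y) := Fintype.ofFinite _
    have hJ : jankov (Set.Ici y) ⟨y, le_rfl⟩ (fun x => x.2) ∈ jankovAxioms L :=
      ⟨_, _, _, _, _, fun hL => hyφ (hL φ hφ), rfl⟩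
    exact not_validIn_jankov _ _ _ ((hYJ _ hJ).of_isUpperSet (isUpperSet_Ici y))

theorem degFmp_eq_one_iff_forall_mem_fmpSpan (hL : SuperIntuitionistic L) :
    degFmp L = 1 ↔ ∀ L' ∈ fmpSpan L, L' = L := by
  have hself : L ∈ fmpSpan L := ⟨hL, fun _ _ _ => Iff.rfl⟩
  rw [degFmp, Cardinal.eq_one_iff_unique]
  refine ⟨fun ⟨hsub, _⟩ L' hL' => congrArg Subtype.val (hsub.elim ⟨L', hL'⟩ ⟨L, hself⟩),
    fun h => ⟨⟨fun a b => Subtype.ext ((h _ a.2).trans (h _ b.2).symm)⟩,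
      ⟨⟨L, hself⟩⟩⟩⟩

end Logics

/-- **Theorem.** An si-logic `L` has degree of fmp equal to `1` iff `L` has the
finite model property and is axiomatizable by Jankov formulas. -/
theorem degFmp_eq_one_iff (L : Set IForm) (hL : SuperIntuitionistic L) :
    degFmp L = 1 ↔ HasFMP L ∧ JankovAxiomatizable L := by
  rw [degFmp_eq_one_iff_forall_mem_fmpSpan hL]
  constructor
  · intro huniq
    refine ⟨(huniq _ ⟨superIntuitionistic_LPlus L, sameFinPosets_LPlus L⟩).symm,
      jankovAxioms L, ?_, (huniq _ (IPCPlus_jankovAxioms_mem_fmpSpan L)).symm⟩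
    rintro _ ⟨X, i1, i2, r, hr, -, rfl⟩
    exact ⟨X, i1, i2, r, hr, rfl⟩
  · rintro ⟨hfmp, Ax, hAx, rfl⟩ L' ⟨hL', hsame⟩
    refine (hfmp.subset_of_sameFinPosets hsame).antisymm (IPCPlus_subset hL' fun φ hφ => ?_)
    exact (hAx φ hφ).mem_of_sameFinPosets (subset_IPCPlus hφ) hL' hsame
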